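/- arXiv:2309.14647 — 2 statements merged into one kernel-verified Lean document; each statement's English description precedes it below -/
import Mathlib

section
/- Loss-recovery invariant: in the recovery algorithm, for every core c and sequence i, once core c has processed any packet with sequence number j ≥ i, the log entry log[c][i] is no longer NOT_INIT: it is either history[i] (if sequence i's history was present in some packet received at c) or LOST. -/
/-- A per-core log entry: uninitialized, marked lost, or holding history data. -/
inductive LogEntry (M : Type*) where
  | notInit : LogEntry M
  | lost : LogEntry M
  | data : M → LogEntry M

/-- Processing one received packet with sequence number `j` at a core whose log
is `s.1` and whose previous maximum sequence is `s.2`: for every `k` with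
`s.2 < k ≤ j`, set `log[k] := LOST` if `k < max 1 (j+1-N)` (lost between the
sequencer and the core) and `log[k] := history[k]` otherwise. -/
def procPacket {M : Type*} (N : ℕ) (history : ℕ → M) :
    (ℕ → LogEntry M) × ℕ → ℕ → (ℕ → LogEntry M) × ℕ :=
  fun s j =>
    (fun i =>
      if s.2 < i ∧ i ≤ j then
        if i < max 1 (j + 1 - N) then LogEntry.lost else LogEntry.data (history i)
      else s.1 i,
     max s.2 j)

/-!
Sequence `i` is written exactly once: by the first received packet `j ≥ i`, since before it
the running maximum is below `i` and afterwards it is at least `i`. That packet writes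
`history[i]` iff `i` lies in its window `[max 1 (j + 1 - N), j]`. Later packets `j' > j` have
windows starting no earlier, and earlier packets do not reach `i`, so this happens iff some
received packet's window contains `i`.
-/

section

variable {M : Type*} (N : ℕ) (history : ℕ → M)

theorem procPacket_fst_of_le (s : (ℕ → LogEntry M) × ℕ) (j : ℕ) {i : ℕ} (hi : i ≤ s.2) :
    (procPacket N history s j).1 i = s.1 i :=
  if_neg fun h => absurd h.1 (not_lt.mpr hi)

theorem foldl_procPacket_fst_of_le (js : List ℕ) (s : (ℕ → LogEntry M) × ℕ) {i : ℕ}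
    (hi : i ≤ s.2) : (js.foldl (procPacket N history) s).1 i = s.1 i := by
  induction js generalizing s with
  | nil => rfl
  | cons j tl ih =>
    rw [List.foldl_cons, ih _ (hi.trans (le_max_left _ _)), procPacket_fst_of_le N history s j hi]

theorem exists_window_mem_cons_iff {j : ℕ} {tl : List ℕ} (hj : ∀ j' ∈ tl, j < j') {i : ℕ}
    (hij : i ≤ j) :
    (∃ j' ∈ j :: tl, max 1 (j' + 1 - N) ≤ i ∧ i ≤ j') ↔ max 1 (j + 1 - N) ≤ i := by
  refine ⟨?_, fun h => ⟨j, List.mem_cons_self, h, hij⟩⟩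
  rintro ⟨j', hj', hlo, -⟩
  rcases List.mem_cons.mp hj' with rfl | hj'
  · exact hlo
  · have := hj j' hj'
    omega

theorem foldl_procPacket_fst {js : List ℕ} (hsorted : js.Pairwise (· < ·))
    (s : (ℕ → LogEntry M) × ℕ) {i : ℕ} (hsi : s.2 < i) (hcov : ∃ j ∈ js, i ≤ j) :
    (js.foldl (procPacket N history) s).1 i =
      if ∃ j ∈ js, max 1 (j + 1 - N) ≤ i ∧ i ≤ j then LogEntry.data (history i)
      else LogEntry.lost := by
  induction js generalizing s with
  | nil => simp at hcov
  | cons j tl ih =>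
    obtain ⟨hj_lt, htl⟩ := List.pairwise_cons.mp hsorted
    rw [List.foldl_cons]
    by_cases hij : i ≤ j
    · rw [foldl_procPacket_fst_of_le N history tl _ (hij.trans (le_max_right _ _)),
        if_congr (exists_window_mem_cons_iff N hj_lt hij) rfl rfl]
      dsimp only [procPacket]
      rw [if_pos ⟨hsi, hij⟩]
      simp only [← not_lt, ite_not]
    · have hcov_tl : ∃ j' ∈ tl, i ≤ j' := by
        simpa only [List.exists_mem_cons_iff, hij, false_or] using hcov
      simp only [List.exists_mem_cons_iff, hij, and_false, false_or]
      exact ih htl _ (max_lt hsi (not_le.mp hij)) hcov_tl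

end

theorem loss_recovery_log_invariant_general
    {M : Type*} (N : ℕ) (history : ℕ → M) (js : List ℕ)
    (hsorted : List.Chain' (· < ·) js)
    (i : ℕ) (hi : 1 ≤ i) (hcov : ∃ j ∈ js, i ≤ j) :
    (js.foldl (procPacket N history) (fun _ => LogEntry.notInit, 0)).1 i ≠
        LogEntry.notInit ∧
    ((∃ j ∈ js, max 1 (j + 1 - N) ≤ i ∧ i ≤ j) →
      (js.foldl (procPacket N history) (fun _ => LogEntry.notInit, 0)).1 i =
        LogEntry.data (history i)) ∧
    (¬ (∃ j ∈ js, max 1 (j + 1 - N) ≤ i ∧ i ≤ j) →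
      (js.foldl (procPacket N history) (fun _ => LogEntry.notInit, 0)).1 i =
        LogEntry.lost) := by
  rw [foldl_procPacket_fst N history (List.isChain_iff_pairwise.mp hsorted) _ hi hcov]
  split_ifs with hwindow
  · exact ⟨nofun, fun _ => rfl, fun h => absurd hwindow h⟩
  · exact ⟨nofun, fun h => absurd h hwindow, fun _ => rfl⟩

/-- Loss-recovery invariant: if core `c` has processed (in increasing order, no
reordering) the packets with sequence numbers `js`, then for every sequence
`i ≥ 1` such that some received packet has sequence number `j ≥ i`, the log
entry for `i` is no longer `NOT_INIT`: it is `history[i]` if sequence `i`'s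
history was present in some packet received at `c`, and `LOST` otherwise. -/
theorem loss_recovery_log_invariant
    {M : Type*} (N : ℕ) (hN : 1 ≤ N) (history : ℕ → M) (js : List ℕ)
    (hsorted : List.Chain' (· < ·) js) (hpos : ∀ j ∈ js, 1 ≤ j)
    (i : ℕ) (hi : 1 ≤ i) (hcov : ∃ j ∈ js, i ≤ j) :
    (js.foldl (procPacket N history) (fun _ => LogEntry.notInit, 0)).1 i ≠
        LogEntry.notInit ∧
    ((∃ j ∈ js, max 1 (j + 1 - N) ≤ i ∧ i ≤ j) →
      (js.foldl (procPacket N history) (fun _ => LogEntry.notInit, 0)).1 i =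
        LogEntry.data (history i)) ∧
    (¬ (∃ j ∈ js, max 1 (j + 1 - N) ≤ i ∧ i ≤ j) →
      (js.foldl (procPacket N history) (fun _ => LogEntry.notInit, 0)).1 i =
        LogEntry.lost) :=
  loss_recovery_log_invariant_general N history js hsorted i hi hcov
end

section
/- Induction step lemma (Lemma 1 of the paper): if all cores have started processing sequence number i (i.e., each core has either received history[i] or marked it LOST), then all cores finish processing sequence i: a core that received history[i] finishes immediately, and a core that marked it LOST terminates its recovery loop because every other core eventually publishes either history[i] or LOST for index i. -/
/-- Induction-step lemma (Lemma 1): `log c t i` is core `c`'s log entry for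
sequence `i` at time `t`; entries are persistent once set. If all cores have
started processing sequence `i` (each core eventually sets its entry for `i` to
`LOST` or `history[i]`), then all cores finish processing sequence `i`: a core
whose entry is `history[i]` finishes immediately, and a core that marked `i`
`LOST` terminates its recovery loop because, at some time `t`, every other core
has published either `history[i]` or `LOST` for index `i`. -/
theorem loss_recovery_induction_step
    {C M : Type*} [Fintype C] (history : ℕ → M) (i : ℕ)
    (log : C → ℕ → ℕ → LogEntry M)
    (hpersist : ∀ c k t t', t ≤ t' → log c t k ≠ LogEntry.notInit →
      log c t' k = log c t k)
    (hstarted : ∀ c, ∃ t, log c t i = LogEntry.lost ∨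
      log c t i = LogEntry.data (history i)) :
    ∀ c, ∃ t,
      log c t i = LogEntry.data (history i) ∨
      (log c t i = LogEntry.lost ∧
        ∀ c', c' ≠ c →
          log c' t i = LogEntry.lost ∨
            log c' t i = LogEntry.data (history i)) := by
  classical
  choose t ht using hstarted
  intro c
  by_cases hE : IsEmpty C
  · exact absurd (Fintype.card_pos_iff.mpr ⟨c⟩).ne' (by simp [Fintype.card_eq_zero])
  · have : Nonempty C := not_isEmpty_iff.mp hE
    obtain ⟨T, hT⟩ := Finset.exists_le (Finset.univ.image t)
    have key : ∀ c', log c' T i = LogEntry.lost ∨ log c' T i = LogEntry.data (history i) := by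
      intro c'
      have hle : t c' ≤ T := hT _ (Finset.mem_image_of_mem t (Finset.mem_univ c'))
      have hne : log c' (t c') i ≠ LogEntry.notInit := by
        rcases ht c' with h | h <;> simp [h]
      have := hpersist c' i (t c') T hle hne
      rw [this]; exact ht c'
    refine ⟨T, ?_⟩
    rcases key c with h | h
    · exact Or.inr ⟨h, fun c' _ => key c'⟩
    · exact Or.inl h
end
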